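/- arXiv:2004.12739 — 6 statements merged into one kernel-verified Lean document; each statement's English description precedes it below -/
import Mathlib

section
/- Let G = (V,E) be a directed graph, let E⁺ be a set of edges disjoint from E, and let G' = (V, E ∪ E⁺). Let V_aff be the set of endpoints of edges in E⁺. Define a directed graph H on node set V_aff whose edge set is E⁺ together with all pairs (u,v) ∈ V_aff × V_aff such that v is reachable from u in G. Then for all nodes s,t ∈ V: t is reachable from s in G' if and only if t is reachable from s in G, or there exist x₁, x₂ ∈ V_aff such that x₁ is reachable from s in G, x₂ is reachable from x₁ in H, and t is reachable from x₂ in G. -/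
variable {V : Type*}

/-- Affected nodes: endpoints of edges in `Ep`. -/
def Vaff (Ep : V → V → Prop) (x : V) : Prop := ∃ y, Ep x y ∨ Ep y x

/-- Edge relation of the auxiliary graph `H` on the affected nodes:
inserted edges together with reachability (in `E`) pairs of affected nodes. -/
def Hrel (E Ep : V → V → Prop) (u v : V) : Prop :=
  Vaff Ep u ∧ Vaff Ep v ∧ (Ep u v ∨ Relation.ReflTransGen E u v)

/-! A path in `E ∪ Ep` either avoids `Ep`, or runs in `E` up to the source of its first
inserted edge, then in `H` (every maximal `E`-segment between affected nodes is one `H`-edge)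
up to the target of its last inserted edge, and from there in `E` again. Conversely every
`H`-edge unfolds to a path in `E ∪ Ep`. -/

section

variable {E Ep : V → V → Prop} {u v : V}

theorem Vaff.of_left (h : Ep u v) : Vaff Ep u := ⟨v, Or.inl h⟩

theorem Vaff.of_right (h : Ep u v) : Vaff Ep v := ⟨u, Or.inr h⟩

theorem Hrel.of_edge (h : Ep u v) : Hrel E Ep u v :=
  ⟨.of_left h, .of_right h, Or.inl h⟩

theorem Relation.ReflTransGen.union_left (h : Relation.ReflTransGen E u v) :
    Relation.ReflTransGen (fun a b => E a b ∨ Ep a b) u v :=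
  Relation.ReflTransGen.mono (fun _ _ => Or.inl) _ _ h

theorem Relation.ReflTransGen.union_of_hrel (h : Relation.ReflTransGen (Hrel E Ep) u v) :
    Relation.ReflTransGen (fun a b => E a b ∨ Ep a b) u v := by
  induction h with
  | refl => exact .refl
  | tail _ hstep ih =>
    rcases hstep with ⟨-, -, hEp | hE⟩
    · exact ih.tail (Or.inr hEp)
    · exact ih.trans hE.union_left

def ReachViaHrel (E Ep : V → V → Prop) (s t : V) : Prop :=
  Relation.ReflTransGen E s t ∨
    ∃ x₁ x₂, Vaff Ep x₁ ∧ Vaff Ep x₂ ∧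
      Relation.ReflTransGen E s x₁ ∧
      Relation.ReflTransGen (Hrel E Ep) x₁ x₂ ∧
      Relation.ReflTransGen E x₂ t

theorem ReachViaHrel.tail_edge {s b c : V} (h : ReachViaHrel E Ep s b) (hbc : E b c) :
    ReachViaHrel E Ep s c := by
  rcases h with hE | ⟨x₁, x₂, h₁, h₂, hs, hH, ht⟩
  · exact Or.inl (hE.tail hbc)
  · exact Or.inr ⟨x₁, x₂, h₁, h₂, hs, hH, ht.tail hbc⟩

/-- After an inserted edge `b → c` the path is back on an affected node: the pending `E`-segment
from the last affected node `x₂` to `b` becomes an `H`-edge. -/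
theorem ReachViaHrel.tail_inserted {s b c : V} (h : ReachViaHrel E Ep s b) (hbc : Ep b c) :
    ReachViaHrel E Ep s c := by
  refine Or.inr ?_
  rcases h with hE | ⟨x₁, x₂, h₁, h₂, hs, hH, ht⟩
  · exact ⟨b, c, .of_left hbc, .of_right hbc, hE, .single (.of_edge hbc), .refl⟩
  · refine ⟨x₁, c, h₁, .of_right hbc, hs, ?_, .refl⟩
    exact (hH.tail ⟨h₂, .of_left hbc, Or.inr ht⟩).tail (.of_edge hbc)

theorem reachViaHrel_of_reflTransGen_union {s t : V}
    (h : Relation.ReflTransGen (fun a b => E a b ∨ Ep a b) s t) : ReachViaHrel E Ep s t := by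
  induction h with
  | refl => exact Or.inl .refl
  | tail _ hbc ih => exact hbc.elim ih.tail_edge ih.tail_inserted

theorem ReachViaHrel.reflTransGen_union {s t : V} (h : ReachViaHrel E Ep s t) :
    Relation.ReflTransGen (fun a b => E a b ∨ Ep a b) s t := by
  rcases h with hE | ⟨_, _, -, -, hs, hH, ht⟩
  · exact hE.union_left
  · exact (hs.union_left.trans hH.union_of_hrel).trans ht.union_left

end

theorem stmt3_general (E Ep : V → V → Prop) :
    ∀ s t : V,
      Relation.ReflTransGen (fun u v => E u v ∨ Ep u v) s t ↔
        (Relation.ReflTransGen E s t ∨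
          ∃ x₁ x₂, Vaff Ep x₁ ∧ Vaff Ep x₂ ∧
            Relation.ReflTransGen E s x₁ ∧
            Relation.ReflTransGen (Hrel E Ep) x₁ x₂ ∧
            Relation.ReflTransGen E x₂ t) :=
  fun _ _ => ⟨reachViaHrel_of_reflTransGen_union, ReachViaHrel.reflTransGen_union⟩

theorem stmt3 (E Ep : V → V → Prop) (hdisj : ∀ u v, ¬ (E u v ∧ Ep u v)) :
    ∀ s t : V,
      Relation.ReflTransGen (fun u v => E u v ∨ Ep u v) s t ↔
        (Relation.ReflTransGen E s t ∨
          ∃ x₁ x₂, Vaff Ep x₁ ∧ Vaff Ep x₂ ∧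
            Relation.ReflTransGen E s x₁ ∧
            Relation.ReflTransGen (Hrel E Ep) x₁ x₂ ∧
            Relation.ReflTransGen E x₂ t) :=
  stmt3_general E Ep
end

section
/- Let G = (V,E) be a directed graph, let E⁺ be a set of edges disjoint from E, and let H be the graph on the set V_aff of endpoints of E⁺ whose edges are E⁺ together with all pairs (u,v) of nodes in V_aff with v reachable from u in G. Then the reachability relation of G' = (V, E ∪ E⁺) restricted to V_aff × V_aff equals the reachability relation of H. -/
variable {V : Type*}

/-!
A path of `G'` between affected nodes splits at its inserted edges into maximal `E`-paths. Each
inserted edge and each `E`-path between the endpoints of inserted edges is an edge of `H`, so the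
path is simulated in `H`. Conversely, every edge of `H` is an inserted edge or an `E`-path.
-/

open Relation

namespace Hrel

variable {E Ep : V → V → Prop}

theorem reflTransGen_sup {u v : V} (h : Hrel E Ep u v) :
    ReflTransGen (fun a b => E a b ∨ Ep a b) u v := by
  obtain ⟨-, -, hEp | hE⟩ := h
  · exact .single (Or.inr hEp)
  · exact ReflTransGen.mono (fun _ _ => Or.inl) _ _ hE

theorem exists_reflTransGen_of_reflTransGen_sup {v : V} (hv : Vaff Ep v) {u : V}
    (h : ReflTransGen (fun a b => E a b ∨ Ep a b) u v) :
    ∃ w, ReflTransGen E u w ∧ Vaff Ep w ∧ ReflTransGen (Hrel E Ep) w v := by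
  induction h using ReflTransGen.head_induction_on with
  | refl => exact ⟨v, .refl, hv, .refl⟩
  | @head a b hab _ ih =>
    obtain ⟨w, hbw, hw, hwv⟩ := ih
    rcases hab with hE | hEp
    · exact ⟨w, hbw.head hE, hw, hwv⟩
    · have ha : Vaff Ep a := ⟨b, .inl hEp⟩
      have hb : Vaff Ep b := ⟨a, .inr hEp⟩
      exact ⟨a, .refl, ha, .head ⟨ha, hb, .inl hEp⟩ (.head ⟨hb, hw, .inr hbw⟩ hwv)⟩

end Hrel

theorem stmt4_general (E Ep : V → V → Prop) :
    ∀ u v : V, Vaff Ep u → Vaff Ep v →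
      (Relation.ReflTransGen (fun a b => E a b ∨ Ep a b) u v ↔
        Relation.ReflTransGen (Hrel E Ep) u v) := by
  intro u v hu hv
  refine ⟨fun h => ?_, reflTransGen_closed (fun _ _ => Hrel.reflTransGen_sup) _ _⟩
  obtain ⟨w, huw, hw, hwv⟩ := Hrel.exists_reflTransGen_of_reflTransGen_sup hv h
  exact .head ⟨hu, hw, .inr huw⟩ hwv

theorem stmt4 (E Ep : V → V → Prop) (hdisj : ∀ u v, ¬ (E u v ∧ Ep u v)) :
    ∀ u v : V, Vaff Ep u → Vaff Ep v →
      (Relation.ReflTransGen (fun a b => E a b ∨ Ep a b) u v ↔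
        Relation.ReflTransGen (Hrel E Ep) u v) :=
  stmt4_general E Ep
end

section
/- Let β ≥ 1 be a natural number, set γ = 4β·3^β + 2, and let h ≥ 1, ℓ with 1 ≤ ℓ ≤ β. Then the sum S = Σ_{i=1}^{ℓ−1} γ^h · 3^i + Σ_{j=1}^{h−1} 2^{h−j} · β · γ^j · 3^β satisfies S < γ^h · 3^ℓ. -/
lemma auxT (β : ℕ) (hβ : 1 ≤ β) :
    ∀ n : ℕ, (∑ j ∈ Finset.Icc 1 n, 2 ^ (n + 1 - j) * β * (4 * β * 3 ^ β + 2) ^ j * 3 ^ β)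
      ≤ (4 * β * 3 ^ β + 2) ^ (n + 1) := by
  intro n
  induction n with
  | zero => simp
  | succ m ih =>
    set γ := 4 * β * 3 ^ β + 2 with hγ
    rw [Finset.sum_Icc_succ_top (by omega : 1 ≤ m + 1)]
    have hcong : (∑ j ∈ Finset.Icc 1 m, 2 ^ (m + 2 - j) * β * γ ^ j * 3 ^ β)
        = 2 * ∑ j ∈ Finset.Icc 1 m, 2 ^ (m + 1 - j) * β * γ ^ j * 3 ^ β := by
      rw [Finset.mul_sum]
      apply Finset.sum_congr rfl
      intro j hj
      simp only [Finset.mem_Icc] at hj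
      have : m + 2 - j = (m + 1 - j) + 1 := by omega
      rw [this, pow_succ]
      ring
    have h1 : m + 2 - (m + 1) = 1 := by omega
    rw [hcong, h1]
    have h2 : 2 * ∑ j ∈ Finset.Icc 1 m, 2 ^ (m + 1 - j) * β * γ ^ j * 3 ^ β
        ≤ 2 * γ ^ (m + 1) := by
      exact Nat.mul_le_mul_left 2 ih
    have h3 : 2 ^ 1 * β * γ ^ (m + 1) * 3 ^ β = (2 * β * 3 ^ β) * γ ^ (m + 1) := by ring
    calc 2 * (∑ j ∈ Finset.Icc 1 m, 2 ^ (m + 1 - j) * β * γ ^ j * 3 ^ β)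
          + 2 ^ 1 * β * γ ^ (m + 1) * 3 ^ β
        ≤ 2 * γ ^ (m + 1) + (2 * β * 3 ^ β) * γ ^ (m + 1) := by
          rw [h3]; exact Nat.add_le_add_right h2 _
      _ = (2 + 2 * β * 3 ^ β) * γ ^ (m + 1) := by ring
      _ ≤ γ * γ ^ (m + 1) := by
          refine Nat.mul_le_mul_right _ ?_
          have h4 : 2 * β * 3 ^ β ≤ 4 * β * 3 ^ β :=
            Nat.mul_le_mul_right _ (by omega)
          rw [hγ]; omega
      _ = γ ^ (m + 2) := by ring

lemma auxA : ∀ m : ℕ, 2 * (∑ i ∈ Finset.Icc 1 m, 3 ^ i) + 3 = 3 ^ (m + 1) := by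
  intro m
  induction m with
  | zero => simp
  | succ k ih =>
    rw [Finset.sum_Icc_succ_top (by omega : 1 ≤ k + 1)]
    rw [pow_succ 3 (k + 1)]
    omega

theorem stmt6 (β h ℓ : ℕ) (hβ : 1 ≤ β) (hh : 1 ≤ h) (hℓ1 : 1 ≤ ℓ) (hℓ2 : ℓ ≤ β) :
    (∑ i ∈ Finset.Icc 1 (ℓ - 1), (4 * β * 3 ^ β + 2) ^ h * 3 ^ i) +
      (∑ j ∈ Finset.Icc 1 (h - 1), 2 ^ (h - j) * β * (4 * β * 3 ^ β + 2) ^ j * 3 ^ β)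
      < (4 * β * 3 ^ β + 2) ^ h * 3 ^ ℓ := by
  set γ := 4 * β * 3 ^ β + 2 with hγ
  have hT : (∑ j ∈ Finset.Icc 1 (h - 1), 2 ^ (h - j) * β * γ ^ j * 3 ^ β) ≤ γ ^ h := by
    have key := auxT β hβ (h - 1)
    rw [(by omega : h - 1 + 1 = h)] at key
    exact key
  have hA : 2 * (∑ i ∈ Finset.Icc 1 (ℓ - 1), 3 ^ i) + 3 = 3 ^ ℓ := by
    have h1 : ℓ - 1 + 1 = ℓ := by omega
    rw [← h1]
    exact auxA (ℓ - 1)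
  have hfirst : (∑ i ∈ Finset.Icc 1 (ℓ - 1), γ ^ h * 3 ^ i)
      = γ ^ h * ∑ i ∈ Finset.Icc 1 (ℓ - 1), 3 ^ i := by
    rw [Finset.mul_sum]
  rw [hfirst]
  have hG : 1 ≤ γ ^ h := Nat.one_le_pow _ _ (by omega)
  set G := γ ^ h
  set A := ∑ i ∈ Finset.Icc 1 (ℓ - 1), 3 ^ i
  set T := ∑ j ∈ Finset.Icc 1 (h - 1), 2 ^ (h - j) * β * γ ^ j * 3 ^ β
  -- goal: G * A + T < G * 3 ^ ℓ, with 2A + 3 = 3^ℓ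
  have : G * 3 ^ ℓ = G * (2 * A + 3) := by rw [hA]
  rw [this]
  nlinarith [hT, hG, Nat.zero_le (G * A)]
end

section
/- Let G be a directed graph, let ρ₁ and ρ₂ be two distinct simple s-t-paths in G, and let w be any weight assignment on edges. If both ρ₁ and ρ₂ have minimum weight among all s-t-paths, then there exist nodes u and v and subpaths ρ₁^{uv} of ρ₁ and ρ₂^{uv} of ρ₂, both from u to v, that are internally disjoint (they share no node other than u and v) and distinct, and w(ρ₁^{uv}) = w(ρ₂^{uv}). -/
variable {V : Type*}

/-- Sum of edge weights along a list of nodes. -/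
def listWeight (w : V → V → ℤ) : List V → ℤ
  | a :: b :: l => w a b + listWeight w (b :: l)
  | _ => 0

/-- `l` is a (directed) path/walk from `s` to `t` along edge relation `E`. -/
def IsPath (E : V → V → Prop) (l : List V) (s t : V) : Prop :=
  l ≠ [] ∧ l.head? = some s ∧ l.getLast? = some t ∧ l.Chain' E

/-! Let `u` be the last node of the longest common prefix of the two paths and `v` the first
node after `u` on `ρ₁` that also lies on `ρ₂`; it exists because both paths end in `t`, and both
continue after `u` because they are simple. The two segments from `u` to `v` share only their
endpoints. Exchanging one segment for the other turns each path into an `s`-`t` walk (possibly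
not simple, which `IsPath` allows), so minimality of both paths gives both inequalities between
the weights of the segments. -/

theorem listWeight_split (w : V → V → ℤ) :
    ∀ (l₁ : List V) (c : V) (l₂ : List V),
      listWeight w (l₁ ++ c :: l₂) = listWeight w (l₁ ++ [c]) + listWeight w (c :: l₂)
  | [], _, _ => by simp [listWeight]
  | [_], _, _ => by simp [listWeight]
  | a :: b :: l, c, l₂ => by
    simp only [List.cons_append, listWeight]
    rw [← List.cons_append, listWeight_split w (b :: l) c l₂, List.cons_append]
    ring

theorem listWeight_split_segment (w : V → V → ℤ) (c a b : List V) (u v : V) :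
    listWeight w (c ++ u :: (a ++ v :: b)) =
      listWeight w (c ++ [u]) + listWeight w (u :: (a ++ [v])) + listWeight w (v :: b) := by
  have hsplit := listWeight_split w (u :: a) v b
  simp only [List.cons_append] at hsplit
  rw [listWeight_split, hsplit]
  ring

theorem isPath_of_isChain {E : V → V → Prop} {u v : V} {a : List V}
    (h : List.IsChain E (u :: (a ++ [v]))) : IsPath E (u :: (a ++ [v])) u v :=
  ⟨List.cons_ne_nil _ _, rfl, by rw [← List.cons_append, List.getLast?_concat], h⟩

theorem IsPath.replace_segment {E : V → V → Prop} {s t u v : V} {c a b d : List V}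
    (h : IsPath E (c ++ u :: (a ++ v :: b)) s t) (hd : List.IsChain E (u :: (d ++ [v]))) :
    IsPath E (c ++ u :: (d ++ v :: b)) s t := by
  obtain ⟨-, hs, ht, hE⟩ := h
  refine ⟨by simp, ?_, ?_, ?_⟩
  · rw [← hs]; cases c <;> simp
  · rw [← ht]; simp [List.getLast?_append, List.getLast?_cons]
  · change List.IsChain E _ at hE ⊢
    rw [List.isChain_split, List.isChain_cons_split] at hE ⊢
    exact ⟨hE.1, hd, hE.2.2⟩

theorem listWeight_segment_le_of_minimal {E : V → V → Prop} {w : V → V → ℤ} {s t u v : V}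
    {c a b d : List V} (h : IsPath E (c ++ u :: (a ++ v :: b)) s t)
    (hmin : ∀ ρ, IsPath E ρ s t → listWeight w (c ++ u :: (a ++ v :: b)) ≤ listWeight w ρ)
    (hd : List.IsChain E (u :: (d ++ [v]))) :
    listWeight w (u :: (a ++ [v])) ≤ listWeight w (u :: (d ++ [v])) := by
  have hle := hmin _ (h.replace_segment hd)
  rw [listWeight_split_segment, listWeight_split_segment] at hle
  linarith

theorem exists_common_prefix (x : V) : ∀ l₁ l₂ : List V, l₁ ≠ l₂ →
    ∃ c u r₁ r₂, x :: l₁ = c ++ u :: r₁ ∧ x :: l₂ = c ++ u :: r₂ ∧ r₁.head? ≠ r₂.head?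
  | y :: l₁, z :: l₂, hne => by
    by_cases hyz : y = z
    · subst hyz
      obtain ⟨c, u, r₁, r₂, h₁, h₂, hr⟩ := exists_common_prefix y l₁ l₂ (by simpa using hne)
      exact ⟨x :: c, u, r₁, r₂, by simp [h₁], by simp [h₂], hr⟩
    · exact ⟨[], x, y :: l₁, z :: l₂, rfl, rfl, by simp [hyz]⟩
  | [], l₂, hne => ⟨[], x, [], l₂, rfl, rfl, by cases l₂ <;> simp_all⟩
  | l₁, [], hne => ⟨[], x, l₁, [], rfl, rfl, by cases l₁ <;> simp_all⟩

theorem List.getLast?_append_cons_of_ne_nil (c : List V) (u : V) {r : List V} (hr : r ≠ []) :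
    (c ++ u :: r).getLast? = some (r.getLast hr) := by
  rw [List.getLast?_append_cons, List.getLast?_cons, List.getLast?_eq_some_getLast hr,
    Option.getD_some]

theorem List.Nodup.eq_nil_of_getLast?_eq {c r : List V} {u : V} (h : (c ++ u :: r).Nodup)
    (hu : (c ++ u :: r).getLast? = some u) : r = [] := by
  by_contra hr
  rw [List.getLast?_append_cons_of_ne_nil c u hr, Option.some.injEq] at hu
  have : u ∈ r := hu ▸ List.getLast_mem hr
  simp_all [List.nodup_append]

theorem List.exists_eq_append_cons_of_exists (p : V → Prop) {l : List V} (h : ∃ x ∈ l, p x) :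
    ∃ a x b, l = a ++ x :: b ∧ p x ∧ ∀ y ∈ a, ¬ p y := by
  classical
  have hsome : (l.find? fun x => decide (p x)).isSome := List.find?_isSome.2 (by simpa using h)
  obtain ⟨x, hx⟩ := Option.isSome_iff_exists.1 hsome
  obtain ⟨hpx, a, b, rfl, ha⟩ := List.find?_eq_some_iff_append.1 hx
  exact ⟨a, x, b, rfl, by simpa using hpx, by simpa using ha⟩

theorem exists_internally_disjoint_segments {ρ₁ ρ₂ : List V} {s t : V}
    (hs₁ : ρ₁.head? = some s) (hs₂ : ρ₂.head? = some s)
    (ht₁ : ρ₁.getLast? = some t) (ht₂ : ρ₂.getLast? = some t)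
    (hn₁ : ρ₁.Nodup) (hn₂ : ρ₂.Nodup) (hne : ρ₁ ≠ ρ₂) :
    ∃ c u a₁ a₂ v b₁ b₂, ρ₁ = c ++ u :: (a₁ ++ v :: b₁) ∧ ρ₂ = c ++ u :: (a₂ ++ v :: b₂) ∧
      a₁ ≠ a₂ ∧ ∀ x ∈ a₁, x ∉ a₂ := by
  obtain ⟨m₁, rfl⟩ := List.head?_eq_some_iff.1 hs₁
  obtain ⟨m₂, rfl⟩ := List.head?_eq_some_iff.1 hs₂
  obtain ⟨c, u, r₁, r₂, e₁, e₂, hr⟩ := exists_common_prefix s m₁ m₂ (by simpa using hne)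
  rw [e₁] at ht₁ hn₁ ⊢
  rw [e₂] at ht₂ hn₂ ⊢
  have hr₁ : r₁ ≠ [] := by
    rintro rfl
    rw [hn₂.eq_nil_of_getLast?_eq (by rw [ht₂]; simpa [eq_comm] using ht₁)] at hr
    exact hr rfl
  have hr₂ : r₂ ≠ [] := by
    rintro rfl
    rw [hn₁.eq_nil_of_getLast?_eq (by rw [ht₁]; simpa [eq_comm] using ht₂)] at hr
    exact hr rfl
  have hlast : r₁.getLast hr₁ ∈ r₂ := by
    rw [List.getLast?_append_cons_of_ne_nil c u hr₁] at ht₁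
    rw [List.getLast?_append_cons_of_ne_nil c u hr₂, ← ht₁, Option.some.injEq] at ht₂
    exact ht₂ ▸ List.getLast_mem hr₂
  obtain ⟨a₁, v, b₁, rfl, hv, ha₁⟩ :=
    List.exists_eq_append_cons_of_exists (· ∈ r₂) ⟨_, List.getLast_mem hr₁, hlast⟩
  obtain ⟨a₂, b₂, rfl⟩ := List.append_of_mem hv
  refine ⟨c, u, a₁, a₂, v, b₁, b₂, rfl, rfl, ?_, fun x hx₁ hx₂ => ha₁ x hx₁ (by simp [hx₂])⟩
  rintro rfl
  exact hr (by simp [List.head?_append])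

theorem stmt8 (E : V → V → Prop) (w : V → V → ℤ) (s t : V) (ρ₁ ρ₂ : List V)
    (h1 : IsPath E ρ₁ s t) (h2 : IsPath E ρ₂ s t)
    (hn1 : ρ₁.Nodup) (hn2 : ρ₂.Nodup) (hne : ρ₁ ≠ ρ₂)
    (hmin1 : ∀ ρ, IsPath E ρ s t → listWeight w ρ₁ ≤ listWeight w ρ)
    (hmin2 : ∀ ρ, IsPath E ρ s t → listWeight w ρ₂ ≤ listWeight w ρ) :
    ∃ (u v : V) (σ₁ σ₂ : List V),
      σ₁ <:+: ρ₁ ∧ σ₂ <:+: ρ₂ ∧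
      IsPath E σ₁ u v ∧ IsPath E σ₂ u v ∧ σ₁ ≠ σ₂ ∧
      (∀ x ∈ σ₁, x ∈ σ₂ → x = u ∨ x = v) ∧
      listWeight w σ₁ = listWeight w σ₂ := by
  obtain ⟨c, u, a₁, a₂, v, b₁, b₂, rfl, rfl, hne, hdisj⟩ :=
    exists_internally_disjoint_segments h1.2.1 h2.2.1 h1.2.2.1 h2.2.2.1 hn1 hn2 hne
  have hinf₁ : u :: (a₁ ++ [v]) <:+: c ++ u :: (a₁ ++ v :: b₁) := ⟨c, b₁, by simp⟩
  have hinf₂ : u :: (a₂ ++ [v]) <:+: c ++ u :: (a₂ ++ v :: b₂) := ⟨c, b₂, by simp⟩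
  have hE₁ : List.IsChain E (u :: (a₁ ++ [v])) := List.IsChain.infix h1.2.2.2 hinf₁
  have hE₂ : List.IsChain E (u :: (a₂ ++ [v])) := List.IsChain.infix h2.2.2.2 hinf₂
  refine ⟨u, v, _, _, hinf₁, hinf₂, isPath_of_isChain hE₁, isPath_of_isChain hE₂,
    by simpa using hne, ?_, le_antisymm (listWeight_segment_le_of_minimal h1 hmin1 hE₂)
      (listWeight_segment_le_of_minimal h2 hmin2 hE₁)⟩
  simp only [List.mem_cons, List.mem_append]
  grind
end

section
/- Let N, c ∈ ℕ with N ≥ 2 and let S be a set of integers, each representable with m bits (i.e., 0 ≤ x < 2^m for all x ∈ S), with |S| ≤ m^c. Then there exists a constant c₀ depending only on c and a prime p with p ≤ m^{c₀} such that for all distinct x, y ∈ S, x ≢ y (mod p). -/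
/-!
A prime that fails to separate `S` divides one of the fewer than `|S|² ≤ m ^ (2c)` nonzero
differences of elements of `S`, and each such difference, being below `2 ^ m`, has at most
`m` prime factors; so at most `m ^ (2c + 1)` primes fail. On the other hand Chebyshev's
estimate `2 ^ n ≤ (n + 1) · lcm(1, …, n) ≤ n ^ (π(n) + 2)` shows that there are more than
`m ^ k` primes up to `m ^ (k + 2)` once `m ≥ 3(k + 2)`.
-/

open Finset
open scoped Nat.Prime

namespace Nat

theorem two_pow_card_primeFactors_le {d : ℕ} (hd : d ≠ 0) : 2 ^ #d.primeFactors ≤ d :=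
  calc 2 ^ #d.primeFactors ≤ ∏ p ∈ d.primeFactors, p :=
        pow_card_le_prod _ _ _ fun _ hp => (prime_of_mem_primeFactors hp).two_le
    _ ≤ d := le_of_dvd (pos_of_ne_zero hd) (prod_primeFactors_dvd d)

theorem card_primeFactors_le_of_lt_two_pow {d m : ℕ} (hd : d < 2 ^ m) :
    #d.primeFactors ≤ m := by
  rcases eq_or_ne d 0 with rfl | hd0
  · simp
  exact ((Nat.pow_lt_pow_iff_right one_lt_two).mp
    ((two_pow_card_primeFactors_le hd0).trans_lt hd)).le

theorem lcmUpto_le_pow_primeCounting (n : ℕ) : lcmUpto n ≤ n ^ π n := by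
  rw [lcmUpto_eq_prod_pow_log, ← primesLE_card_eq_primeCounting, ← prod_const]
  refine prod_le_prod' fun p hp => pow_log_le_self p ?_
  have := le_of_mem_primesLE hp
  have := two_le_of_mem_primesLE hp
  omega

theorem two_pow_le_pow_primeCounting_add_two {n : ℕ} (hn : 2 ≤ n) : 2 ^ n ≤ n ^ (π n + 2) :=
  calc 2 ^ n ≤ (n + 1) * lcmUpto n := Chebyshev.two_pow_le_mul_lcmUpto n
    _ ≤ n ^ 2 * n ^ π n := by
        gcongr
        · nlinarith
        · exact lcmUpto_le_pow_primeCounting n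
    _ = n ^ (π n + 2) := by ring

theorem pow_lt_primeCounting_pow {k m : ℕ} (hm : 3 * (k + 2) ≤ m) :
    m ^ k < π (m ^ (k + 2)) := by
  by_contra! hπ
  have hm1 : 1 ≤ m ^ k := one_le_pow _ _ (by omega)
  have hexp : m * ((k + 2) * (m ^ k + 2)) ≤ m ^ (k + 2) :=
    calc m * ((k + 2) * (m ^ k + 2)) ≤ m * (3 * (k + 2) * m ^ k) :=
          Nat.mul_le_mul_left _ (by nlinarith)
      _ ≤ m * (m * m ^ k) := by gcongr
      _ = m ^ (k + 2) := by ring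
  have hn : 2 ≤ m ^ (k + 2) := (Nat.le_self_pow (by omega) m).trans' (by omega)
  have habsurd : 2 ^ m ^ (k + 2) < 2 ^ m ^ (k + 2) := calc
    2 ^ m ^ (k + 2) ≤ (m ^ (k + 2)) ^ (π (m ^ (k + 2)) + 2) :=
        two_pow_le_pow_primeCounting_add_two hn
    _ ≤ (m ^ (k + 2)) ^ (m ^ k + 2) := pow_le_pow_right₀ (by omega) (by omega)
    _ = m ^ ((k + 2) * (m ^ k + 2)) := (pow_mul _ _ _).symm
    _ < (2 ^ m) ^ ((k + 2) * (m ^ k + 2)) := Nat.pow_lt_pow_left m.lt_two_pow_self (by positivity)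
    _ = 2 ^ (m * ((k + 2) * (m ^ k + 2))) := (pow_mul _ _ _).symm
    _ ≤ 2 ^ m ^ (k + 2) := Nat.pow_le_pow_right two_pos hexp
  exact habsurd.false

theorem exists_prime_le_notMem_of_card_lt_primeCounting {T : Finset ℕ} {n : ℕ}
    (hT : #T < π n) : ∃ p, p.Prime ∧ p ≤ n ∧ p ∉ T := by
  rw [← primesLE_card_eq_primeCounting] at hT
  obtain ⟨p, hp, hpT⟩ := exists_mem_notMem_of_card_lt_card hT
  exact ⟨p, prime_of_mem_primesLE hp, le_of_mem_primesLE hp, hpT⟩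

end Nat

def differencePrimes (S : Finset ℕ) : Finset ℕ :=
  S.offDiag.biUnion fun q => ((q.1 : ℤ) - q.2).natAbs.primeFactors

theorem card_differencePrimes_le {S : Finset ℕ} {m : ℕ} (hS : ∀ x ∈ S, x < 2 ^ m) :
    #(differencePrimes S) ≤ #S * #S * m :=
  calc #(differencePrimes S) ≤ #S.offDiag * m := by
        refine card_biUnion_le_card_mul _ _ _ fun q hq => ?_
        obtain ⟨hx, hy, -⟩ := mem_offDiag.mp hq
        have := hS _ hx
        have := hS _ hy
        exact Nat.card_primeFactors_le_of_lt_two_pow (by omega)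
    _ ≤ #S * #S * m := by
        rw [offDiag_card]
        gcongr
        exact Nat.sub_le _ _

theorem injOn_mod_of_notMem_differencePrimes {S : Finset ℕ} {p : ℕ} (hp : p.Prime)
    (hpS : p ∉ differencePrimes S) : Set.InjOn (· % p) S := by
  intro x hx y hy hxy
  by_contra hne
  refine hpS (mem_biUnion.mpr ⟨(x, y), mem_offDiag.mpr ⟨hx, hy, hne⟩, ?_⟩)
  have hdvd : (p : ℤ) ∣ (x : ℤ) - y := Nat.modEq_iff_dvd.mp hxy.symm
  exact Nat.mem_primeFactors.mpr ⟨hp, Int.natCast_dvd.mp hdvd, by omega⟩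

/-- The Fredman–Komlós–Szemerédi prime isolation lemma: for every `c` there is
a `c₀` such that for all sufficiently large `m`, every set of at most `m ^ c`
integers of `m` bits each can be separated by residues modulo some prime
`p < m ^ c₀`. -/
theorem stmt13 (c : ℕ) :
    ∃ c₀ : ℕ, ∃ m₀ : ℕ, ∀ m : ℕ, m₀ ≤ m → ∀ S : Finset ℕ,
      (∀ x ∈ S, x < 2 ^ m) → S.card ≤ m ^ c →
      ∃ p : ℕ, p.Prime ∧ p < m ^ c₀ ∧
        ∀ x ∈ S, ∀ y ∈ S, x % p = y % p → x = y := by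
  refine ⟨2 * c + 4, 3 * (2 * c + 3), fun m hm S hS hcard => ?_⟩
  have hT : #(differencePrimes S) < π (m ^ (2 * c + 3)) :=
    calc #(differencePrimes S) ≤ #S * #S * m := card_differencePrimes_le hS
      _ ≤ m ^ c * m ^ c * m := by gcongr
      _ = m ^ (2 * c + 1) := by ring
      _ < π (m ^ (2 * c + 1 + 2)) := Nat.pow_lt_primeCounting_pow hm
  obtain ⟨p, hp, hpm, hpS⟩ := Nat.exists_prime_le_notMem_of_card_lt_primeCounting hT
  refine ⟨p, hp, hpm.trans_lt (Nat.pow_lt_pow_right (by omega) (by omega)), ?_⟩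
  exact fun x hx y hy => injOn_mod_of_notMem_differencePrimes hp hpS hx hy
end

section
/- Let G be an undirected graph with connected components C₁,...,Cm, and let E⁺ be a set of additional undirected edges. Define the quotient graph H whose nodes are the components Cᵢ containing an endpoint of some edge in E⁺, with an edge between Cᵢ and Cⱼ (i ≠ j) whenever some edge of E⁺ has one endpoint in Cᵢ and the other in Cⱼ. Then for any two nodes u, v of G: u and v are connected in G + E⁺ (the graph with edge set E ∪ E⁺) if and only if u and v are connected in G, or the components of u and v in G both contain endpoints of E⁺-edges and they are connected in H. -/
/-!
Every `Ep`-edge joins two touched components, so the relation "connected in `G`, or both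
touched and connected in `H`" contains `E ∪ Ep`; it is moreover an equivalence relation
(symmetric because `Ep` is), hence contains connectivity in `G + E⁺`. Conversely, each step
of `H` is a path in `G + E⁺`: inside a component, then across an `Ep`-edge.
-/

/-- `u`'s component contains an endpoint of an `Ep`-edge. -/
def Touched (E Ep : V → V → Prop) (u : V) : Prop :=
  ∃ x, Relation.EqvGen E u x ∧ ∃ y, Ep x y ∨ Ep y x

/-- Connectivity in the quotient graph `H` whose nodes are the components of
`G` containing endpoints of `Ep`-edges, lifted to representatives: one step
either stays inside a component or follows an `Ep`-edge between components. -/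
def ConnH (E Ep : V → V → Prop) (u v : V) : Prop :=
  Relation.ReflTransGen
    (fun a b => Relation.EqvGen E a b ∨
      ∃ x y, Ep x y ∧ Relation.EqvGen E a x ∧ Relation.EqvGen E b y) u v

open Relation

def QuotientStep (E Ep : V → V → Prop) (a b : V) : Prop :=
  EqvGen E a b ∨ ∃ x y, Ep x y ∧ EqvGen E a x ∧ EqvGen E b y

variable {E Ep : V → V → Prop}

theorem connH_eq_reflTransGen_quotientStep : ConnH E Ep = ReflTransGen (QuotientStep E Ep) :=
  rfl

theorem Touched.of_eqvGen {u v : V} (huv : EqvGen E u v) (hv : Touched E Ep v) :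
    Touched E Ep u :=
  let ⟨x, hvx, hx⟩ := hv
  ⟨x, huv.trans _ _ _ hvx, hx⟩

theorem QuotientStep.symm (hEp : ∀ u v, Ep u v → Ep v u) {a b : V}
    (h : QuotientStep E Ep a b) : QuotientStep E Ep b a := by
  rcases h with h | ⟨x, y, hxy, hax, hby⟩
  · exact .inl (h.symm _ _)
  · exact .inr ⟨y, x, hEp _ _ hxy, hby, hax⟩

theorem QuotientStep.le_eqvGen_sup :
    QuotientStep E Ep ≤ EqvGen (fun a b => E a b ∨ Ep a b) := by
  have hE : EqvGen E ≤ EqvGen (fun a b => E a b ∨ Ep a b) :=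
    EqvGen.mono fun _ _ => .inl
  rintro a b (h | ⟨x, y, hxy, hax, hby⟩)
  · exact hE _ _ h
  · exact (hE _ _ hax).trans _ _ _ <|
      (EqvGen.rel _ _ (.inr hxy)).trans _ _ _ (hE _ _ (hby.symm _ _))

theorem ConnH.symm (hEp : ∀ u v, Ep u v → Ep v u) {u v : V} (h : ConnH E Ep u v) :
    ConnH E Ep v u :=
  ReflTransGen.mono (fun _ _ => QuotientStep.symm hEp) _ _ (ReflTransGen.swap _ _ h)

theorem ConnH.eqvGen_sup {u v : V} (h : ConnH E Ep u v) :
    EqvGen (fun a b => E a b ∨ Ep a b) u v := by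
  rw [connH_eq_reflTransGen_quotientStep] at h
  simpa only [reflTransGen_eq_self] using ReflTransGen.mono QuotientStep.le_eqvGen_sup _ _ h

theorem equivalence_eqvGen_or_touched_connH (hEp : ∀ u v, Ep u v → Ep v u) :
    Equivalence fun u v =>
      EqvGen E u v ∨ (Touched E Ep u ∧ Touched E Ep v ∧ ConnH E Ep u v) where
  refl u := .inl (.refl u)
  symm
    | .inl h => .inl (h.symm _ _)
    | .inr ⟨hu, hv, h⟩ => .inr ⟨hv, hu, h.symm hEp⟩
  trans
    | .inl h₁, .inl h₂ => .inl (h₁.trans _ _ _ h₂)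
    | .inl h₁, .inr ⟨hv, hw, h₂⟩ => .inr ⟨hv.of_eqvGen h₁, hw, .head (.inl h₁) h₂⟩
    | .inr ⟨hu, hv, h₁⟩, .inl h₂ =>
      .inr ⟨hu, hv.of_eqvGen (h₂.symm _ _), .tail h₁ (.inl h₂)⟩
    | .inr ⟨hu, _, h₁⟩, .inr ⟨_, hw, h₂⟩ => .inr ⟨hu, hw, h₁.trans h₂⟩

theorem eqvGen_or_touched_connH_of_eqvGen_sup (hEp : ∀ u v, Ep u v → Ep v u) {u v : V}
    (h : EqvGen (fun a b => E a b ∨ Ep a b) u v) :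
    EqvGen E u v ∨ (Touched E Ep u ∧ Touched E Ep v ∧ ConnH E Ep u v) := by
  refine (equivalence_eqvGen_or_touched_connH hEp).eqvGen_iff.1 (EqvGen.mono ?_ _ _ h)
  rintro a b (hab | hab)
  · exact .inl (.rel _ _ hab)
  · exact .inr ⟨⟨a, .refl a, b, .inl hab⟩, ⟨b, .refl b, a, .inr hab⟩,
      .single (.inr ⟨a, b, hab, .refl a, .refl b⟩)⟩

theorem stmt17_general (E Ep : V → V → Prop)
    (hEp : ∀ u v, Ep u v → Ep v u) :
    ∀ u v : V,
      Relation.EqvGen (fun a b => E a b ∨ Ep a b) u v ↔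
        (Relation.EqvGen E u v ∨
          (Touched E Ep u ∧ Touched E Ep v ∧ ConnH E Ep u v)) := by
  intro u v
  refine ⟨eqvGen_or_touched_connH_of_eqvGen_sup hEp, ?_⟩
  rintro (h | ⟨-, -, h⟩)
  · exact EqvGen.mono (fun _ _ => .inl) _ _ h
  · exact h.eqvGen_sup

theorem stmt17 (E Ep : V → V → Prop)
    (hE : ∀ u v, E u v → E v u) (hEp : ∀ u v, Ep u v → Ep v u) :
    ∀ u v : V,
      Relation.EqvGen (fun a b => E a b ∨ Ep a b) u v ↔
        (Relation.EqvGen E u v ∨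
          (Touched E Ep u ∧ Touched E Ep v ∧ ConnH E Ep u v)) :=
  stmt17_general E Ep hEp
end
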